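/- arXiv:1705.10065 — 3 statements merged into one kernel-verified Lean document; each statement's English description precedes it below -/
import Mathlib

section
/- For any base b ≥ 2, any distinct letters x, y ∈ {1,...,b-1}, any letter z ∈ {0,...,b-1}, and any word u over {0,...,b-1}, the number of words in L_b occurring as scattered subwords of xyzu equals the number of such subwords of xzu, plus twice the number of such subwords of yzu, minus twice the number of such subwords of zu. -/
/-!
Prepending a letter `a` to `w` adds the words `a :: s` for the subwords `s` of `w`; the ones
already present are exactly the subwords of `w` starting with `a`. Writing `S w` for the number
of subwords of `w`, `H a w` for those starting with `a`, and `L w = lbCount w`, this gives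
`S (a :: w) = 2 S w - H a w` and, for `a ≠ 0`, `L (a :: w) = L w + S w - H a w`.
Since `H x (y :: w) = H x w` for `x ≠ y`, expanding both sides of the identity in terms of
`L w`, `S w`, `H x w`, `H y w` gives `L w + 3 S w - H x w - 2 H y w` each time.
-/

/-- Number of distinct words in `L_b` (no leading zero, or empty) occurring as
scattered subwords (subsequences) of `u`. -/
def lbCount (u : List ℕ) : ℕ :=
  ((u.sublists.filter (fun v => v.head? ≠ some 0)).dedup).length

/-- `S_b(n)`: number of distinct words of `L_b` occurring as scattered subwords of
the base-`b` expansion of `n` (most significant digit first, `rep_b(0) = ε`). -/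
def Sb (b n : ℕ) : ℕ := lbCount ((Nat.digits b n).reverse)

/-- Summatory function `A_b(n) = ∑_{j<n} S_b(j)`. -/
def Asum (b n : ℕ) : ℕ := ∑ j ∈ Finset.range n, Sb b j

open Finset

section Subwords

variable {α : Type*} [DecidableEq α]

def subwords (u : List α) : Finset (List α) := u.sublists.toFinset

@[simp]
lemma mem_subwords {v u : List α} : v ∈ subwords u ↔ v.Sublist u := by
  simp [subwords]

lemma subwords_cons (a : α) (u : List α) :
    subwords (a :: u) = subwords u ∪ (subwords u).image (List.cons a) := by
  ext v
  simp only [mem_subwords, mem_union, mem_image, List.sublist_cons_iff]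
  constructor
  · rintro (h | ⟨r, rfl, hr⟩)
    exacts [Or.inl h, Or.inr ⟨r, hr, rfl⟩]
  · rintro (h | ⟨r, hr, rfl⟩)
    exacts [Or.inl h, Or.inr ⟨r, rfl, hr⟩]

lemma filter_subwords_inter_image_cons (p : List α → Prop) [DecidablePred p] {a : α}
    (hp : ∀ s, p (a :: s)) (u : List α) :
    (subwords u).filter p ∩ (subwords u).image (List.cons a)
      = (subwords u).filter (·.head? = some a) := by
  ext v
  simp only [mem_inter, mem_filter, mem_image]
  constructor
  · rintro ⟨⟨hv, -⟩, r, -, rfl⟩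
    exact ⟨hv, rfl⟩
  · rintro ⟨hv, hhead⟩
    obtain ⟨t, rfl⟩ : ∃ t, v = a :: t := by
      cases v with
      | nil => simp at hhead
      | cons c t => exact ⟨t, by simpa using hhead⟩
    exact ⟨⟨hv, hp t⟩, t, mem_subwords.2 ((List.sublist_cons_self a t).trans
      (mem_subwords.1 hv)), rfl⟩

lemma card_filter_subwords_cons (p : List α → Prop) [DecidablePred p] {a : α}
    (hp : ∀ s, p (a :: s)) (u : List α) :
    #((subwords (a :: u)).filter p) + #((subwords u).filter (·.head? = some a))
      = #((subwords u).filter p) + #(subwords u) := by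
  have himage : ((subwords u).image (List.cons a)).filter p
      = (subwords u).image (List.cons a) := by
    refine filter_true_of_mem fun v hv => ?_
    obtain ⟨s, -, rfl⟩ := mem_image.1 hv
    exact hp s
  have hcard := card_union_add_card_inter ((subwords u).filter p)
    ((subwords u).image (List.cons a))
  rw [filter_subwords_inter_image_cons p hp,
    card_image_of_injective _ List.cons_injective] at hcard
  rwa [subwords_cons, filter_union, himage]

lemma card_subwords_cons (a : α) (u : List α) :
    #(subwords (a :: u)) + #((subwords u).filter (·.head? = some a)) = 2 * #(subwords u) := by
  simpa [two_mul] using card_filter_subwords_cons (fun _ => True) (a := a) (fun _ => trivial) u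

lemma filter_head_subwords_cons_of_ne {a c : α} (hac : a ≠ c) (u : List α) :
    (subwords (c :: u)).filter (·.head? = some a) = (subwords u).filter (·.head? = some a) := by
  ext v
  simp only [mem_filter, mem_subwords, List.sublist_cons_iff]
  constructor
  · rintro ⟨h | ⟨r, rfl, -⟩, hhead⟩
    · exact ⟨h, hhead⟩
    · exact absurd (Option.some_injective _ hhead).symm hac
  · rintro ⟨h, hhead⟩
    exact ⟨Or.inl h, hhead⟩

end Subwords

lemma lbCount_eq_card (u : List ℕ) : lbCount u = #((subwords u).filter (·.head? ≠ some 0)) := by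
  rw [lbCount, subwords, ← List.card_toFinset, List.toFinset_filter]
  simp

lemma lbCount_cons_add {a : ℕ} (ha : a ≠ 0) (u : List ℕ) :
    lbCount (a :: u) + #((subwords u).filter (·.head? = some a))
      = lbCount u + #(subwords u) := by
  simpa only [lbCount_eq_card] using
    card_filter_subwords_cons (·.head? ≠ some 0) (a := a) (by simpa using ha) u

theorem stmt4_general (x y z : ℕ) (hx : 1 ≤ x)
    (hy : 1 ≤ y) (hxy : x ≠ y)
    (u : List ℕ) :
    (lbCount (x :: y :: z :: u) : ℤ) =
      lbCount (x :: z :: u) + 2 * lbCount (y :: z :: u) - 2 * lbCount (z :: u) := by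
  have hx0 : x ≠ 0 := by omega
  have hy0 : y ≠ 0 := by omega
  have hxyw := lbCount_cons_add hx0 (y :: z :: u)
  have hyw := lbCount_cons_add hy0 (z :: u)
  have hxw := lbCount_cons_add hx0 (z :: u)
  have hsyw := card_subwords_cons y (z :: u)
  rw [filter_head_subwords_cons_of_ne hxy] at hxyw
  omega

theorem stmt4 (b x y z : ℕ) (hb : 2 ≤ b) (hx : 1 ≤ x) (hxb : x < b)
    (hy : 1 ≤ y) (hyb : y < b) (hxy : x ≠ y) (hz : z < b)
    (u : List ℕ) (hu : ∀ d ∈ u, d < b) :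
    (lbCount (x :: y :: z :: u) : ℤ) =
      lbCount (x :: z :: u) + 2 * lbCount (y :: z :: u) - 2 * lbCount (z :: u) :=
  stmt4_general x y z hx hy hxy u
end

section
/- For every n ≥ 0: S_3(3n+2) = 5·S_3(n) − S_3(3n) − S_3(3n+1), S_3(9n) = −S_3(n) + 2·S_3(3n), S_3(9n+1) = −2·S_3(n) + 2·S_3(3n) + S_3(3n+1), S_3(9n+2) = 3·S_3(n) + S_3(3n) − S_3(3n+1), S_3(9n+4) = −S_3(n) + 2·S_3(3n+1), S_3(9n+6) = 8·S_3(n) − S_3(3n) − 2·S_3(3n+1), and S_3(9n+7) = 8·S_3(n) − 2·S_3(3n) − S_3(3n+1). -/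
/-! Write `A(u)` for the subwords of `u` that do not start with `0`, and `E_a(u)` for those ending
in `a`. Appending a letter `c` adds exactly the words `w c` with `w ∈ A(u)` (except `w = []` when
`c = 0`), and the old words among them form `E_c(u)`. Hence
`|A(uc)| = 2|A(u)| - |E_c(u)| - [c = 0]`, `|E_c(uc)| = |A(u)| - [c = 0]` and `E_a(uc) = E_a(u)` for
`a ≠ c`. Together with `|A(u)| = 1 + |E_0(u)| + |E_1(u)| + |E_2(u)|` for ternary `u`, these linear
relations eliminate the `E`-counts and leave the identities, with `u` the ternary expansion of `n`.
A leading `0` changes no count, so `n = 0` needs no separate treatment. -/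

open Finset

section Subwords

variable {α : Type*} [DecidableEq α] (z : α)

def lbSubwords (u : List α) : Finset (List α) :=
  (u.sublists.filter fun v => v.head? ≠ some z).toFinset

def lbSubwordsEndingIn (u : List α) (a : α) : Finset (List α) :=
  (lbSubwords z u).filter fun v => v.getLast? = some a

variable {z}

theorem mem_lbSubwords {u v : List α} : v ∈ lbSubwords z u ↔ v.Sublist u ∧ v.head? ≠ some z := by
  simp [lbSubwords, List.mem_sublists]

theorem lbSubwords_cons_self (u : List α) : lbSubwords z (z :: u) = lbSubwords z u := by
  ext v
  simp only [mem_lbSubwords, List.sublist_cons_iff]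
  constructor
  · rintro ⟨h | ⟨r, rfl, -⟩, hv⟩
    · exact ⟨h, hv⟩
    · simp at hv
  · exact fun ⟨h, hv⟩ => ⟨Or.inl h, hv⟩

theorem lbSubwords_subset_append (u w : List α) : lbSubwords z u ⊆ lbSubwords z (u ++ w) :=
  fun _ hv => mem_lbSubwords.2
    ⟨(mem_lbSubwords.1 hv).1.trans (List.sublist_append_left u w), (mem_lbSubwords.1 hv).2⟩

theorem lbSubwords_concat (u : List α) (c : α) :
    lbSubwords z (u ++ [c]) = lbSubwords z u ∪ lbSubwordsEndingIn z (u ++ [c]) c := by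
  ext v
  simp only [lbSubwordsEndingIn, mem_union, mem_filter, mem_lbSubwords]
  constructor
  · rintro ⟨hs, hv⟩
    obtain ⟨v₁, v₂, rfl, h₁, h₂⟩ := List.sublist_append_iff.1 hs
    rcases List.sublist_singleton.1 h₂ with rfl | rfl
    · exact Or.inl ⟨by simpa using h₁, by simpa using hv⟩
    · exact Or.inr ⟨⟨hs, hv⟩, by simp⟩
  · rintro (⟨hs, hv⟩ | ⟨h, -⟩)
    · exact ⟨hs.trans (List.sublist_append_left u [c]), hv⟩
    · exact h

theorem lbSubwords_inter_endingIn_concat (u : List α) (c : α) :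
    lbSubwords z u ∩ lbSubwordsEndingIn z (u ++ [c]) c = lbSubwordsEndingIn z u c := by
  rw [lbSubwordsEndingIn, inter_filter, inter_eq_left.2 (lbSubwords_subset_append u [c]),
    lbSubwordsEndingIn]

theorem lbSubwordsEndingIn_concat_of_ne (u : List α) {a c : α} (h : a ≠ c) :
    lbSubwordsEndingIn z (u ++ [c]) a = lbSubwordsEndingIn z u a := by
  ext v
  simp only [lbSubwordsEndingIn, mem_filter, mem_lbSubwords]
  constructor
  · rintro ⟨⟨hs, hv⟩, hl⟩
    obtain ⟨v₁, v₂, rfl, h₁, h₂⟩ := List.sublist_append_iff.1 hs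
    rcases List.sublist_singleton.1 h₂ with rfl | rfl
    · exact ⟨⟨by simpa using h₁, by simpa using hv⟩, by simpa using hl⟩
    · simp [Ne.symm h] at hl
  · rintro ⟨⟨hs, hv⟩, hl⟩
    exact ⟨⟨hs.trans (List.sublist_append_left u [c]), hv⟩, hl⟩

/-- Every `w ∈ lbSubwords z u` extends to `w ++ [c]`, except `w = []` when `c = z`. -/
theorem card_lbSubwordsEndingIn_concat_self (u : List α) (c : α) :
    #(lbSubwordsEndingIn z (u ++ [c]) c) + (if c = z then 1 else 0) = #(lbSubwords z u) := by
  set W := if c = z then (lbSubwords z u).erase [] else lbSubwords z u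
  have hmemW : ∀ w, w ∈ W ↔ w.Sublist u ∧ (w ++ [c]).head? ≠ some z := by
    intro w
    by_cases hc : c = z <;> rcases w with _ | ⟨x, w⟩ <;> simp [W, hc, mem_lbSubwords]
  have hW : lbSubwordsEndingIn z (u ++ [c]) c = W.image (· ++ [c]) := by
    ext v
    simp only [lbSubwordsEndingIn, mem_filter, mem_lbSubwords, List.getLast?_eq_some_iff,
      mem_image, hmemW]
    constructor
    · rintro ⟨⟨hs, hv⟩, w, rfl⟩
      exact ⟨w, ⟨(List.append_sublist_append_right _).1 hs, hv⟩, rfl⟩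
    · rintro ⟨w, ⟨hs, hv⟩, rfl⟩
      exact ⟨⟨(List.append_sublist_append_right _).2 hs, hv⟩, w, rfl⟩
  have hcard : #W + (if c = z then 1 else 0) = #(lbSubwords z u) := by
    by_cases hc : c = z
    · simp only [W, if_pos hc]
      exact card_erase_add_one (mem_lbSubwords.2 ⟨List.nil_sublist u, by simp⟩)
    · simp [W, hc]
  rwa [hW, card_image_of_injective _ (List.append_left_injective [c])]

theorem card_lbSubwords_concat (u : List α) (c : α) :
    #(lbSubwords z (u ++ [c])) + #(lbSubwordsEndingIn z u c) + (if c = z then 1 else 0) =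
      2 * #(lbSubwords z u) := by
  have h := card_union_add_card_inter (lbSubwords z u) (lbSubwordsEndingIn z (u ++ [c]) c)
  rw [← lbSubwords_concat, lbSubwords_inter_endingIn_concat] at h
  have := card_lbSubwordsEndingIn_concat_self (z := z) u c
  omega

theorem card_lbSubwords_eq_one_add_sum (u : List α) {S : Finset α} (hS : ∀ x ∈ u, x ∈ S) :
    #(lbSubwords z u) = 1 + ∑ a ∈ S, #(lbSubwordsEndingIn z u a) := by
  have hsplit : lbSubwords z u = insert [] (S.biUnion (lbSubwordsEndingIn z u)) := by
    ext v
    simp only [mem_insert, mem_biUnion, lbSubwordsEndingIn, mem_filter]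
    refine ⟨fun hv => ?_, ?_⟩
    · rcases List.eq_nil_or_concat v with rfl | ⟨w, a, rfl⟩
      · exact Or.inl rfl
      · have ha : a ∈ u := (mem_lbSubwords.1 hv).1.subset (by simp)
        exact Or.inr ⟨a, hS a ha, hv, by simp⟩
    · rintro (rfl | ⟨a, -, hv, -⟩)
      · exact mem_lbSubwords.2 ⟨List.nil_sublist u, by simp⟩
      · exact hv
  have hdisj : (S : Set α).PairwiseDisjoint (lbSubwordsEndingIn z u) := by
    intro a _ b _ hab
    refine disjoint_left.2 fun v ha hb => hab ?_
    simp only [lbSubwordsEndingIn, mem_filter] at ha hb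
    exact Option.some.inj (ha.2.symm.trans hb.2)
  rw [hsplit, card_insert_of_notMem (by simp [lbSubwordsEndingIn]), card_biUnion hdisj, add_comm]

end Subwords

theorem lbCount_eq_card_s10 (u : List ℕ) : lbCount u = #(lbSubwords 0 u) :=
  (List.card_toFinset _).symm

theorem lbCount_cons_zero (u : List ℕ) : lbCount (0 :: u) = lbCount u := by
  rw [lbCount_eq_card_s10, lbCount_eq_card_s10, lbSubwords_cons_self]

-- For `n = r = 0` the left side lacks the leading `0` of the right side, which `lbCount` ignores.
theorem lbCount_reverse_digits_mul_add_append {b r : ℕ} (hb : 1 < b) (hr : r < b) (n : ℕ)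
    (w : List ℕ) :
    lbCount ((b.digits (b * n + r)).reverse ++ w) = lbCount ((b.digits n).reverse ++ r :: w) := by
  by_cases h : r = 0 ∧ n = 0
  · obtain ⟨rfl, rfl⟩ := h
    simp [lbCount_cons_zero]
  · rw [add_comm, Nat.digits_add b hb r n hr (by tauto)]
    simp

theorem Sb_mul_add {b r : ℕ} (hb : 1 < b) (hr : r < b) (n : ℕ) :
    Sb b (b * n + r) = lbCount ((b.digits n).reverse ++ [r]) := by
  rw [Sb, ← List.append_nil (List.reverse _), lbCount_reverse_digits_mul_add_append hb hr]

theorem Sb_sq_mul_add {b a c : ℕ} (hb : 1 < b) (ha : a < b) (hc : c < b) (n : ℕ) :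
    Sb b (b ^ 2 * n + (b * a + c)) = lbCount ((b.digits n).reverse ++ [a, c]) := by
  rw [show b ^ 2 * n + (b * a + c) = b * (b * n + a) + c by ring, Sb_mul_add hb hc,
    lbCount_reverse_digits_mul_add_append hb ha]

theorem lbCount_ternary_identities (u : List ℕ) (hu : ∀ x ∈ u, x < 3) :
    ((lbCount (u ++ [2]) : ℤ) = 5 * lbCount u - lbCount (u ++ [0]) - lbCount (u ++ [1])) ∧
    ((lbCount (u ++ [0, 0]) : ℤ) = -(lbCount u : ℤ) + 2 * lbCount (u ++ [0])) ∧
    ((lbCount (u ++ [0, 1]) : ℤ) =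
      -2 * lbCount u + 2 * lbCount (u ++ [0]) + lbCount (u ++ [1])) ∧
    ((lbCount (u ++ [0, 2]) : ℤ) = 3 * lbCount u + lbCount (u ++ [0]) - lbCount (u ++ [1])) ∧
    ((lbCount (u ++ [1, 1]) : ℤ) = -(lbCount u : ℤ) + 2 * lbCount (u ++ [1])) ∧
    ((lbCount (u ++ [2, 0]) : ℤ) =
      8 * lbCount u - lbCount (u ++ [0]) - 2 * lbCount (u ++ [1])) ∧
    ((lbCount (u ++ [2, 1]) : ℤ) =
      8 * lbCount u - 2 * lbCount (u ++ [0]) - lbCount (u ++ [1])) := by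
  have grading := card_lbSubwords_eq_one_add_sum (z := 0) u (S := range 3)
    (by simpa using hu)
  simp only [sum_range_succ, sum_range_zero, zero_add] at grading
  have A0 := card_lbSubwords_concat (z := 0) u 0
  have A1 := card_lbSubwords_concat (z := 0) u 1
  have A2 := card_lbSubwords_concat (z := 0) u 2
  have E0 := card_lbSubwordsEndingIn_concat_self (z := 0) u 0
  have E1 := card_lbSubwordsEndingIn_concat_self (z := 0) u 1
  have A00 := card_lbSubwords_concat (z := 0) (u ++ [0]) 0
  have A01 := card_lbSubwords_concat (z := 0) (u ++ [0]) 1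
  have A02 := card_lbSubwords_concat (z := 0) (u ++ [0]) 2
  have A11 := card_lbSubwords_concat (z := 0) (u ++ [1]) 1
  have A20 := card_lbSubwords_concat (z := 0) (u ++ [2]) 0
  have A21 := card_lbSubwords_concat (z := 0) (u ++ [2]) 1
  rw [lbSubwordsEndingIn_concat_of_ne u (by norm_num : (1 : ℕ) ≠ 0)] at A01
  rw [lbSubwordsEndingIn_concat_of_ne u (by norm_num : (2 : ℕ) ≠ 0)] at A02
  rw [lbSubwordsEndingIn_concat_of_ne u (by norm_num : (0 : ℕ) ≠ 2)] at A20
  rw [lbSubwordsEndingIn_concat_of_ne u (by norm_num : (1 : ℕ) ≠ 2)] at A21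
  simp only [List.append_assoc, List.singleton_append, if_pos, if_neg, one_ne_zero,
    OfNat.ofNat_ne_zero, not_false_eq_true, add_zero] at *
  simp only [lbCount_eq_card_s10]
  omega

theorem stmt10 (n : ℕ) :
    ((Sb 3 (3 * n + 2) : ℤ) = 5 * Sb 3 n - Sb 3 (3 * n) - Sb 3 (3 * n + 1)) ∧
    ((Sb 3 (9 * n) : ℤ) = -(Sb 3 n : ℤ) + 2 * Sb 3 (3 * n)) ∧
    ((Sb 3 (9 * n + 1) : ℤ) = -2 * Sb 3 n + 2 * Sb 3 (3 * n) + Sb 3 (3 * n + 1)) ∧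
    ((Sb 3 (9 * n + 2) : ℤ) = 3 * Sb 3 n + Sb 3 (3 * n) - Sb 3 (3 * n + 1)) ∧
    ((Sb 3 (9 * n + 4) : ℤ) = -(Sb 3 n : ℤ) + 2 * Sb 3 (3 * n + 1)) ∧
    ((Sb 3 (9 * n + 6) : ℤ) = 8 * Sb 3 n - Sb 3 (3 * n) - 2 * Sb 3 (3 * n + 1)) ∧
    ((Sb 3 (9 * n + 7) : ℤ) = 8 * Sb 3 n - 2 * Sb 3 (3 * n) - Sb 3 (3 * n + 1)) := by
  have key := lbCount_ternary_identities (Nat.digits 3 n).reverse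
    fun x hx => Nat.digits_lt_base (by norm_num) (List.mem_reverse.1 hx)
  rw [← Sb_mul_add (r := 0), ← Sb_mul_add (r := 1), ← Sb_mul_add (r := 2),
    ← Sb_sq_mul_add (a := 0) (c := 0), ← Sb_sq_mul_add (a := 0) (c := 1),
    ← Sb_sq_mul_add (a := 0) (c := 2), ← Sb_sq_mul_add (a := 1) (c := 1),
    ← Sb_sq_mul_add (a := 2) (c := 0), ← Sb_sq_mul_add (a := 2) (c := 1)] at key
  · simpa [← Sb.eq_1] using key
  all_goals norm_num
end

section
/- For all b ≥ 2, all x ∈ {1,...,b−1}, all ℓ ≥ 1, and all r with 0 ≤ r ≤ b^{ℓ-1}, one has A_b(x·b^ℓ + x·b^{ℓ-1} + r) = (4xb − 2x − 2b + 2)·(2b−1)^{ℓ-1} + 2·A_b(x·b^{ℓ-1} + r) − A_b(r). -/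
section Subwords

variable {α : Type*} [DecidableEq α]

def headAvoidingCount (a : α) (w : List α) : ℕ :=
  (w.sublists.toFinset.filter (·.head? ≠ some a)).card

lemma sublists_toFinset_cons (c : α) (w : List α) :
    (c :: w).sublists.toFinset = w.sublists.toFinset ∪ w.sublists.toFinset.image (c :: ·) := by
  ext v
  simp only [List.mem_toFinset, List.mem_sublists, Finset.mem_union, Finset.mem_image]
  constructor
  · intro h
    rcases List.sublist_cons_iff.mp h with h | ⟨u, rfl, hu⟩
    · exact Or.inl h
    · exact Or.inr ⟨u, hu, rfl⟩
  · rintro (h | ⟨u, hu, rfl⟩)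
    · exact h.cons c
    · exact hu.cons_cons c

lemma headAvoidingCount_nil (a : α) : headAvoidingCount a [] = 1 := by
  simp [headAvoidingCount, Finset.filter_singleton]

lemma headAvoidingCount_cons_self (a : α) (w : List α) :
    headAvoidingCount a (a :: w) = headAvoidingCount a w := by
  simp [headAvoidingCount, sublists_toFinset_cons, Finset.filter_union, Finset.filter_image]

lemma headAvoidingCount_cons_of_ne {a c : α} (hca : c ≠ a) (w : List α) :
    headAvoidingCount a (c :: w) = headAvoidingCount a w + headAvoidingCount c w := by
  unfold headAvoidingCount
  set U := w.sublists.toFinset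
  have hfilter : (c :: w).sublists.toFinset.filter (·.head? ≠ some a) =
      U.filter (·.head? ≠ some a) ∪ U.image (c :: ·) := by
    simp [U, sublists_toFinset_cons, Finset.filter_union, Finset.filter_image, hca]
  have hinter : U.filter (·.head? ≠ some a) ∩ U.image (c :: ·) = U.filter (·.head? = some c) := by
    ext v
    simp only [Finset.mem_inter, Finset.mem_filter, Finset.mem_image, U, List.mem_toFinset,
      List.mem_sublists]
    constructor
    · rintro ⟨⟨hv, _⟩, u, _, rfl⟩
      exact ⟨hv, rfl⟩
    · rintro ⟨hv, hhead⟩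
      obtain ⟨u, rfl⟩ : ∃ u, v = c :: u := by
        cases v <;> simp_all
      exact ⟨⟨hv, by simpa using hca⟩, u, (List.sublist_cons_self c u).trans hv, rfl⟩
  have hunion := Finset.card_union_add_card_inter (U.filter (·.head? ≠ some a)) (U.image (c :: ·))
  have hsplit : (U.filter (·.head? = some c)).card + (U.filter (·.head? ≠ some c)).card = U.card :=
    Finset.card_filter_add_card_filter_not _
  rw [hinter, Finset.card_image_of_injective _ List.cons_injective] at hunion
  rw [hfilter]
  omega

lemma sum_headAvoidingCount_cons {ι : Type*} (s : Finset ι) (w : ι → List α) (a c : α) :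
    ∑ i ∈ s, headAvoidingCount a (c :: w i) =
      ∑ i ∈ s, headAvoidingCount a (w i) +
        if c = a then 0 else ∑ i ∈ s, headAvoidingCount c (w i) := by
  split_ifs with hca
  · simp [hca, headAvoidingCount_cons_self]
  · simp [headAvoidingCount_cons_of_ne hca, Finset.sum_add_distrib]

lemma headAvoidingCount_replicate_append (a : α) (k : ℕ) (w : List α) :
    headAvoidingCount a (List.replicate k a ++ w) = headAvoidingCount a w := by
  induction k with
  | zero => rfl
  | succ k ih => rw [List.replicate_succ, List.cons_append, headAvoidingCount_cons_self, ih]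

end Subwords

lemma lbCount_eq_headAvoidingCount (u : List ℕ) : lbCount u = headAvoidingCount 0 u := by
  rw [lbCount, headAvoidingCount, ← List.card_toFinset, List.toFinset_filter]
  simp

def paddedDigits (b m n : ℕ) : List ℕ :=
  List.replicate (m - (Nat.digits b n).length) 0 ++ (Nat.digits b n).reverse

lemma headAvoidingCount_zero_paddedDigits (b m n : ℕ) :
    headAvoidingCount 0 (paddedDigits b m n) = Sb b n := by
  rw [paddedDigits, headAvoidingCount_replicate_append, Sb, lbCount_eq_headAvoidingCount]

lemma paddedDigits_zero_zero (b : ℕ) : paddedDigits b 0 0 = [] := by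
  simp [paddedDigits]

lemma paddedDigits_mul_pow_add {b m y k : ℕ} (hb : 1 < b) (hy : y < b) (hk : k < b ^ m) :
    paddedDigits b (m + 1) (y * b ^ m + k) = y :: paddedDigits b m k := by
  have hlen := (Nat.digits_length_le_iff hb k).mpr hk
  rcases Nat.eq_zero_or_pos y with rfl | hy0
  · rw [zero_mul, zero_add, paddedDigits, paddedDigits,
      show m + 1 - (Nat.digits b k).length = m - (Nat.digits b k).length + 1 by omega,
      List.replicate_succ, List.cons_append]
  · have hdigits : Nat.digits b (y * b ^ m + k) =
        Nat.digits b k ++ List.replicate (m - (Nat.digits b k).length) 0 ++ [y] := by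
      rw [← Nat.digits_of_lt b y hy0.ne' hy, Nat.digits_append_zeroes_append_digits hb hy0,
        Nat.add_sub_cancel' hlen, add_comm, mul_comm]
    simp [paddedDigits, hdigits]
    omega

lemma sum_range_mul_pow_paddedDigits {M : Type*} [AddCommMonoid M] (f : List ℕ → M)
    {b m x : ℕ} (hb : 1 < b) (hx : x ≤ b) :
    ∑ j ∈ Finset.range (x * b ^ m), f (paddedDigits b (m + 1) j) =
      ∑ y ∈ Finset.range x, ∑ k ∈ Finset.range (b ^ m), f (y :: paddedDigits b m k) := by
  induction x with
  | zero => simp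
  | succ x ih =>
    rw [Nat.succ_mul, Finset.sum_range_add, ih (by omega), Finset.sum_range_succ]
    congr 1
    refine Finset.sum_congr rfl fun k hk => ?_
    rw [paddedDigits_mul_pow_add hb (by omega) (Finset.mem_range.mp hk)]

lemma sum_range_add_ite_eq (T : ℕ) {a n : ℕ} (ha : a < n) :
    ∑ y ∈ Finset.range n, (T + if y = a then 0 else T) = (2 * n - 1) * T := by
  rw [← Finset.add_sum_erase _ _ (Finset.mem_range.mpr ha), if_pos rfl,
    Finset.sum_congr rfl fun y hy => by rw [if_neg (Finset.ne_of_mem_erase hy)],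
    Finset.sum_const, Finset.card_erase_of_mem (Finset.mem_range.mpr ha), Finset.card_range,
    smul_eq_mul]
  obtain ⟨n, rfl⟩ : ∃ n', n = n' + 1 := ⟨n - 1, by omega⟩
  rw [Nat.add_sub_cancel, show 2 * (n + 1) - 1 = 2 * n + 1 by omega]
  ring

lemma sum_headAvoidingCount_paddedDigits {b a : ℕ} (hb : 1 < b) (m : ℕ) (ha : a < b) :
    ∑ k ∈ Finset.range (b ^ m), headAvoidingCount a (paddedDigits b m k) = (2 * b - 1) ^ m := by
  induction m generalizing a with
  | zero => simp [paddedDigits_zero_zero, headAvoidingCount_nil]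
  | succ m ih =>
    rw [pow_succ', sum_range_mul_pow_paddedDigits _ hb le_rfl, pow_succ',
      ← sum_range_add_ite_eq _ ha]
    refine Finset.sum_congr rfl fun y hy => ?_
    rw [sum_headAvoidingCount_cons, ih ha, ih (Finset.mem_range.mp hy)]

lemma Sb_mul_pow_add {b m x j : ℕ} (hb : 1 < b) (hx : 0 < x) (hxb : x < b) (hj : j < b ^ m) :
    Sb b (x * b ^ m + j) = Sb b j + headAvoidingCount x (paddedDigits b m j) := by
  rw [← headAvoidingCount_zero_paddedDigits b (m + 1), paddedDigits_mul_pow_add hb hxb hj,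
    headAvoidingCount_cons_of_ne hx.ne', headAvoidingCount_zero_paddedDigits]

lemma Asum_mul_pow_add {b m x N : ℕ} (hb : 1 < b) (hx : 0 < x) (hxb : x < b) (hN : N ≤ b ^ m) :
    Asum b (x * b ^ m + N) = Asum b (x * b ^ m) + Asum b N +
      ∑ j ∈ Finset.range N, headAvoidingCount x (paddedDigits b m j) := by
  rw [Asum, Finset.sum_range_add, Finset.sum_congr rfl fun j hj =>
    Sb_mul_pow_add hb hx hxb ((Finset.mem_range.mp hj).trans_le hN), Finset.sum_add_distrib,
    ← Asum, ← Asum, add_assoc]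

lemma Asum_mul_pow {b x : ℕ} (hb : 1 < b) (m : ℕ) (hx : 0 < x) (hxb : x ≤ b) :
    Asum b (x * b ^ m) = (2 * x - 1) * (2 * b - 1) ^ m := by
  rw [Asum, Finset.sum_congr rfl fun j _ => (headAvoidingCount_zero_paddedDigits b (m + 1) j).symm,
    sum_range_mul_pow_paddedDigits _ hb hxb, ← sum_range_add_ite_eq _ hx]
  refine Finset.sum_congr rfl fun y hy => ?_
  rw [sum_headAvoidingCount_cons, sum_headAvoidingCount_paddedDigits hb m (by omega),
    sum_headAvoidingCount_paddedDigits hb m (by simp at hy; omega)]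

lemma sum_headAvoidingCount_paddedDigits_mul_pow_add {b m x r : ℕ} (hb : 1 < b) (hxb : x < b)
    (hr : r ≤ b ^ m) :
    ∑ j ∈ Finset.range (x * b ^ m + r), headAvoidingCount x (paddedDigits b (m + 1) j) =
      2 * x * (2 * b - 1) ^ m + ∑ k ∈ Finset.range r, headAvoidingCount x (paddedDigits b m k) := by
  rw [Finset.sum_range_add, sum_range_mul_pow_paddedDigits _ hb hxb.le]
  congr 1
  · rw [Finset.sum_congr rfl fun y hy => by
      rw [sum_headAvoidingCount_cons, if_neg (Finset.mem_range.mp hy).ne,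
        sum_headAvoidingCount_paddedDigits hb m hxb,
        sum_headAvoidingCount_paddedDigits hb m ((Finset.mem_range.mp hy).trans hxb)]]
    rw [Finset.sum_const, Finset.card_range, smul_eq_mul]
    ring
  · refine Finset.sum_congr rfl fun k hk => ?_
    rw [paddedDigits_mul_pow_add hb hxb ((Finset.mem_range.mp hk).trans_le hr),
      headAvoidingCount_cons_self]

theorem stmt17 (b x ℓ r : ℕ) (hb : 2 ≤ b) (hx : 1 ≤ x) (hxb : x < b)
    (hℓ : 1 ≤ ℓ) (hr : r ≤ b ^ (ℓ - 1)) :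
    (Asum b (x * b ^ ℓ + x * b ^ (ℓ - 1) + r) : ℤ) =
      (4 * x * b - 2 * x - 2 * b + 2) * (2 * b - 1) ^ (ℓ - 1) +
        2 * Asum b (x * b ^ (ℓ - 1) + r) - Asum b r := by
  obtain ⟨m, rfl⟩ : ∃ m, ℓ = m + 1 := ⟨ℓ - 1, by omega⟩
  rw [Nat.add_sub_cancel] at hr ⊢
  have hfits : x * b ^ m + r ≤ b ^ (m + 1) := by
    rw [pow_succ']
    nlinarith
  have hhigh := Asum_mul_pow_add hb hx hxb hfits
  have hlow := Asum_mul_pow_add hb hx hxb hr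
  rw [sum_headAvoidingCount_paddedDigits_mul_pow_add hb hxb hr] at hhigh
  rw [add_assoc, hhigh, hlow, Asum_mul_pow hb (m + 1) hx hxb.le, Asum_mul_pow hb m hx hxb.le]
  push_cast [Nat.cast_sub (by omega : 1 ≤ 2 * x), Nat.cast_sub (by omega : 1 ≤ 2 * b)]
  ring
end
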